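/- Let {q_k}_{k≥0} be a non-increasing sequence of positive reals. Then the maximal operator of the Walsh–Nörlund means is not bounded from the dyadic Hardy space H_{1/2}[0,1) to L^{1/2}[0,1): there is no constant C such that ‖t*(f)‖_{L^{1/2}} ≤ C ‖f‖_{H_{1/2}} for all f ∈ L¹[0,1) with ‖f‖_{H_{1/2}} < ∞. -/

import Mathlib

open MeasureTheory Filter
open scoped ENNReal NNReal

noncomputable section

namespace Walsh

/-- Lebesgue measure restricted to `[0,1)`. -/
def μI : Measure ℝ := volume.restrict (Set.Ico (0:ℝ) 1)

/-- The `k`-th binary digit `x_k` of `x ∈ [0,1)`, using the expansion terminating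
in `0`'s for dyadic rationals. -/
def digit (k : ℕ) (x : ℝ) : ℕ := (⌊x * 2 ^ (k + 1)⌋).toNat % 2

/-- `ε_k(n)`, the `k`-th binary coefficient of `n`. -/
def eps (k n : ℕ) : ℕ := if n.testBit k then 1 else 0

/-- Walsh–Paley function `w_n(x) = (-1)^{Σ_k ε_k(n) x_k}`. -/
def walsh (n : ℕ) (x : ℝ) : ℝ :=
  (-1 : ℝ) ^ (∑ k ∈ Finset.range (n + 1), eps k n * digit k x)

/-- Walsh–Dirichlet kernel `D_n = Σ_{k=0}^{n-1} w_k`. -/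
def D (n : ℕ) (x : ℝ) : ℝ := ∑ k ∈ Finset.range n, walsh k x

/-- Walsh–Fejér kernel `K_n = (1/n) Σ_{k=1}^{n} D_k`. -/
def K (n : ℕ) (x : ℝ) : ℝ := (1 / (n : ℝ)) * ∑ k ∈ Finset.Icc 1 n, D k x

/-- Partial sums `S_M(f) = Σ_{i=0}^{M-1} f̂(i) w_i` of the Walsh–Fourier series. -/
def S (f : ℝ → ℝ) (M : ℕ) (x : ℝ) : ℝ :=
  ∑ i ∈ Finset.range M, (∫ t in Set.Ico (0:ℝ) 1, f t * walsh i t) * walsh i x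

/-- `Q_n = q_0 + ⋯ + q_{n-1}`. -/
def Q (q : ℕ → ℝ) (n : ℕ) : ℝ := ∑ k ∈ Finset.range n, q k

/-- Walsh–Nörlund mean `t_n(f) = (1/Q_n) Σ_{k=1}^n q_{n-k} S_k(f)`. -/
def t (q : ℕ → ℝ) (n : ℕ) (f : ℝ → ℝ) (x : ℝ) : ℝ :=
  (1 / Q q n) * ∑ k ∈ Finset.Icc 1 n, q (n - k) * S f k x

/-- Walsh–Nörlund kernel `F_n = (1/Q_n) Σ_{k=1}^n q_{n-k} D_k`. -/
def F (q : ℕ → ℝ) (n : ℕ) (x : ℝ) : ℝ :=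
  (1 / Q q n) * ∑ k ∈ Finset.Icc 1 n, q (n - k) * D k x

/-- Maximal Nörlund operator `t^*(f) = sup_{n ≥ 1} |t_n(f)|`, valued in `ℝ≥0∞`. -/
def tstar (q : ℕ → ℝ) (f : ℝ → ℝ) (x : ℝ) : ℝ≥0∞ :=
  ⨆ n ∈ Set.Ici 1, ENNReal.ofReal |t q n f x|

/-- `L^p[0,1)` quasinorm (`0 < p ≤ 1`) of a real function, valued in `ℝ≥0∞`. -/
def LpNorm (p : ℝ) (g : ℝ → ℝ) : ℝ≥0∞ :=
  (∫⁻ x in Set.Ico (0:ℝ) 1, ENNReal.ofReal |g x| ^ p) ^ (1 / p)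

/-- `L^p[0,1)` quasinorm of an `ℝ≥0∞`-valued function. -/
def LpNormE (p : ℝ) (g : ℝ → ℝ≥0∞) : ℝ≥0∞ :=
  (∫⁻ x in Set.Ico (0:ℝ) 1, g x ^ p) ^ (1 / p)

/-- `L^∞[0,1)` norm. -/
def LinfNorm (g : ℝ → ℝ) : ℝ≥0∞ := essSup (fun x => ENNReal.ofReal |g x|) μI

/-- Dyadic maximal function `E^*(f) = sup_m |S_{2^m}(f)|`, valued in `ℝ≥0∞`. -/
def maxS (f : ℝ → ℝ) (x : ℝ) : ℝ≥0∞ := ⨆ m : ℕ, ENNReal.ofReal |S f (2 ^ m) x|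

/-- Dyadic Hardy space quasinorm `‖f‖_{H_p} = ‖sup_m |S_{2^m} f|‖_{L^p}`. -/
def HpNorm (p : ℝ) (f : ℝ → ℝ) : ℝ≥0∞ :=
  (∫⁻ x in Set.Ico (0:ℝ) 1, maxS f x ^ p) ^ (1 / p)

/-- Dyadic (logical) addition `x ∔ y = Σ_k |x_k - y_k| 2^{-(k+1)}`. -/
def dadd (x y : ℝ) : ℝ :=
  ∑' k : ℕ, |(digit k x : ℝ) - (digit k y : ℝ)| * (2 : ℝ)⁻¹ ^ (k + 1)

/-- The dyadic interval `I_N = [0, 2^{-N})`. -/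
def IN (N : ℕ) : Set ℝ := Set.Ico (0:ℝ) (1 / 2 ^ N)

/-- `F_{n,1} = (w_n/Q_n) Σ_{j=1}^r Q_{n^{(j-1)}} w_{2^{n_j}} D_{2^{n_j}}`,
the first part of the Nörlund kernel decomposition. The sum over the binary
decomposition `n = 2^{n_1} + ⋯ + 2^{n_r}` is re-indexed over the set bit
positions `i` of `n`; if `i = n_j` then `n^{(j-1)} = n mod 2^{i+1}`. -/
def F1 (q : ℕ → ℝ) (n : ℕ) (x : ℝ) : ℝ :=
  (walsh n x / Q q n) *
    ∑ i ∈ Finset.range (n + 1),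
      if n.testBit i then Q q (n % 2 ^ (i + 1)) * walsh (2 ^ i) x * D (2 ^ i) x else 0

end Walsh

/-!
Test functions `f_N = ∑_{2^N ≤ i < 2^{N+1}} w_i = w_{2^N} D_{2^N}`. Since
`|f_N| = 2^N 𝟙_{[0, 2^{-N})}` and every `S_{2^m} f_N` is `0` or `f_N`, `‖f_N‖_{H_{1/2}} ≤ 2^{-N}`.
On the other hand `S_{2^N + j} f_N = j w_{2^N}` on `[0, 2^{-(s+1)})` for `j ≤ 2^{s+1}`, so there
`|t_n f_N| = Q_n⁻¹ ∑_{j ≤ m} q_{m-j} j` with `m = 2^{s+1}`, `n = 2^N + m`; for non-increasing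
weights `Q_{2k} ≤ 2 Q_k`, which makes this at least `2^{2s - N - 1}`. Integrating `(t^* f_N)^{1/2}`
over the `N` dyadic shells `[2^{-(s+2)}, 2^{-(s+1)})` gives `‖t^* f_N‖_{L^{1/2}} ≥ N² 2^{-N} / 32`,
so the ratio of the two quasinorms grows like `N²`.
-/

namespace Walsh

open Set Finset

section Digits

lemma digit_succ (k : ℕ) (x : ℝ) : digit (k + 1) x = digit k (2 * x) := by
  unfold digit; ring_nf

lemma digit_add_one {x : ℝ} (hx : 0 ≤ x) (k : ℕ) : digit k (x + 1) = digit k x := by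
  have hfloor : ⌊(x + 1) * 2 ^ (k + 1)⌋ = ⌊x * 2 ^ (k + 1)⌋ + ((2 ^ (k + 1) : ℕ) : ℤ) := by
    rw [← Int.floor_add_natCast]; push_cast; ring_nf
  have hnn : 0 ≤ ⌊x * 2 ^ (k + 1)⌋ := Int.floor_nonneg.2 (by positivity)
  unfold digit
  rw [hfloor, Int.toNat_add_nat hnn, Nat.add_mod, Nat.pow_mod]
  simp

lemma digit_zero_of_mem {b : ℕ} (hb : b < 2) {x : ℝ} (hx : x ∈ Set.Ico ((b : ℝ) / 2) ((b + 1) / 2)) :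
    digit 0 x = b := by
  have hfloor : ⌊x * 2⌋ = b := by
    rw [Int.floor_eq_iff]; constructor <;> push_cast <;> linarith [hx.1, hx.2]
  simp [digit, hfloor, Nat.mod_eq_of_lt hb]

lemma digit_eq_zero_of_mem_IN {s k : ℕ} (hk : k < s) {x : ℝ} (hx : x ∈ IN s) : digit k x = 0 := by
  have hle : (2 : ℝ) ^ (k + 1) ≤ 2 ^ s := pow_le_pow_right₀ (by norm_num) hk
  have hlt : x * 2 ^ (k + 1) < 1 := by
    have := hx.2
    rw [lt_div_iff₀ (by positivity)] at this
    nlinarith [hx.1]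
  have hfloor : ⌊x * 2 ^ (k + 1)⌋ = 0 :=
    Int.floor_eq_zero_iff.2 ⟨mul_nonneg hx.1 (by positivity), hlt⟩
  simp [digit, hfloor]

end Digits

section WalshFunctions

lemma eps_eq_zero_of_lt_two_pow {k n : ℕ} (h : n < 2 ^ k) : eps k n = 0 := by
  simp [eps, Nat.testBit_lt_two_pow h]

lemma eps_succ_two_mul_add {b : ℕ} (hb : b < 2) (k n : ℕ) : eps (k + 1) (2 * n + b) = eps k n := by
  simp only [eps, Nat.testBit_succ]
  congr 3; omega

lemma eps_zero_two_mul_add {b : ℕ} (hb : b < 2) (n : ℕ) : eps 0 (2 * n + b) = b := by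
  interval_cases b <;> simp [eps, Nat.add_mod]

lemma sum_range_eps_mul_of_le {n M L : ℕ} (hn : n < 2 ^ M) (hML : M ≤ L) (a : ℕ → ℕ) :
    ∑ k ∈ range L, eps k n * a k = ∑ k ∈ range M, eps k n * a k := by
  refine (sum_subset (range_subset_range.2 hML) fun k _ hk => ?_).symm
  have : 2 ^ M ≤ 2 ^ k := Nat.pow_le_pow_right (by norm_num) (by simpa using hk)
  rw [eps_eq_zero_of_lt_two_pow (by omega), zero_mul]

lemma walsh_eq_neg_one_pow_sum {n M : ℕ} (hn : n < 2 ^ M) (x : ℝ) :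
    walsh n x = (-1) ^ (∑ k ∈ range M, eps k n * digit k x) := by
  have hn' : n < 2 ^ (n + 1) := Nat.lt_two_pow_self.trans (Nat.pow_lt_pow_succ one_lt_two)
  rw [walsh, ← sum_range_eps_mul_of_le hn' (Nat.le_add_right (n + 1) M),
    sum_range_eps_mul_of_le hn (Nat.le_add_left M (n + 1))]

lemma walsh_mul (a b : ℕ) (x : ℝ) : walsh a x * walsh b x = walsh (a ^^^ b) x := by
  have ha : a < 2 ^ (a + b) :=
    Nat.lt_two_pow_self.trans_le (Nat.pow_le_pow_right two_pos (by omega))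
  have hb : b < 2 ^ (a + b) :=
    Nat.lt_two_pow_self.trans_le (Nat.pow_le_pow_right two_pos (by omega))
  rw [walsh_eq_neg_one_pow_sum ha, walsh_eq_neg_one_pow_sum hb,
    walsh_eq_neg_one_pow_sum (Nat.xor_lt_two_pow ha hb), ← pow_add, ← sum_add_distrib,
    neg_one_pow_eq_pow_mod_two, sum_nat_mod, neg_one_pow_eq_pow_mod_two (R := ℝ) (∑ _ ∈ _, _),
    sum_nat_mod (range _)]
  congr 2
  refine sum_congr rfl fun k _ => ?_
  have hd : digit k x < 2 := Nat.mod_lt _ two_pos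
  simp only [eps, Nat.testBit_xor]
  cases a.testBit k <;> cases b.testBit k <;> simp <;> omega

lemma abs_walsh (n : ℕ) (x : ℝ) : |walsh n x| = 1 := by
  simp [walsh]

lemma walsh_zero (x : ℝ) : walsh 0 x = 1 := by
  simp [walsh, eps]

lemma walsh_eq_one_of_mem_IN {n s : ℕ} (hn : n < 2 ^ s) {x : ℝ} (hx : x ∈ IN s) :
    walsh n x = 1 := by
  rw [walsh_eq_neg_one_pow_sum hn, sum_eq_zero fun k hk => by
    rw [digit_eq_zero_of_mem_IN (mem_range.1 hk) hx, mul_zero], pow_zero]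

lemma walsh_two_mul_add {b : ℕ} (hb : b < 2) (n : ℕ) (x : ℝ) :
    walsh (2 * n + b) x = (-1) ^ (b * digit 0 x) * walsh n (2 * x) := by
  have hlt : 2 * n + b < 2 ^ (n + 1 + 1) := by
    have := (Nat.lt_two_pow_self (n := n)).trans (Nat.pow_lt_pow_succ one_lt_two)
    rw [pow_succ]; omega
  rw [walsh_eq_neg_one_pow_sum hlt, sum_range_succ', pow_add, mul_comm, walsh]
  simp only [eps_succ_two_mul_add hb, digit_succ, eps_zero_two_mul_add hb]

lemma walsh_add_one (n : ℕ) {x : ℝ} (hx : 0 ≤ x) : walsh n (x + 1) = walsh n x := by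
  simp only [walsh, digit_add_one hx]

lemma two_pow_add_eq_xor {N k : ℕ} (hk : k < 2 ^ N) : 2 ^ N + k = 2 ^ N ^^^ k := by
  apply Nat.eq_of_testBit_eq
  intro j
  have := Nat.two_pow_add_eq_or_of_lt hk 1
  rw [mul_one] at this
  rw [this, Nat.testBit_or, Nat.testBit_xor]
  rcases lt_or_ge j N with h | h
  · simp [Nat.testBit_two_pow_of_ne h.ne']
  · simp [Nat.testBit_lt_two_pow (hk.trans_le (Nat.pow_le_pow_right two_pos h))]

lemma walsh_two_pow_add {N k : ℕ} (hk : k < 2 ^ N) (x : ℝ) :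
    walsh (2 ^ N + k) x = walsh (2 ^ N) x * walsh k x := by
  rw [walsh_mul, two_pow_add_eq_xor hk]

lemma measurable_walsh (n : ℕ) : Measurable (walsh n) := by
  have hdigit (k : ℕ) : Measurable (digit k) :=
    (Measurable.of_discrete (f := fun z : ℤ => z.toNat % 2)).comp
      (measurable_id.mul_const _).floor
  exact (Measurable.of_discrete (f := fun e : ℕ => (-1 : ℝ) ^ e)).comp
    (Finset.measurable_sum _ fun k _ => (hdigit k).const_mul _)

lemma integrableOn_walsh (n : ℕ) {s : Set ℝ} (hs : volume s ≠ ⊤) : IntegrableOn (walsh n) s :=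
  Measure.integrableOn_of_bounded hs (measurable_walsh n).aestronglyMeasurable
    (Eventually.of_forall fun x => (abs_walsh n x).le)

end WalshFunctions

section Orthogonality

lemma integral_Ico_comp_two_mul_sub (g : ℝ → ℝ) (d : ℝ) :
    ∫ x in Set.Ico (d / 2) ((d + 1) / 2), g (2 * x - d) = 2⁻¹ * ∫ x in Set.Ico 0 1, g x := by
  have hIco {a b : ℝ} (hab : a ≤ b) (f : ℝ → ℝ) : ∫ x in Set.Ico a b, f x = ∫ x in a..b, f x := by
    rw [intervalIntegral.integral_of_le hab, integral_Ico_eq_integral_Ioo,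
      integral_Ioc_eq_integral_Ioo]
  rw [hIco (by linarith), hIco zero_le_one, intervalIntegral.integral_comp_mul_sub g two_ne_zero,
    show 2 * (d / 2) - d = 0 by ring, show 2 * ((d + 1) / 2) - d = 1 by ring, smul_eq_mul]

lemma walsh_two_mul_add_of_mem {b c : ℕ} (hb : b < 2) (hc : c < 2) (n : ℕ) {x : ℝ}
    (hx : x ∈ Set.Ico ((c : ℝ) / 2) ((c + 1) / 2)) :
    walsh (2 * n + b) x = (-1) ^ (b * c) * walsh n (2 * x - c) := by
  rw [walsh_two_mul_add hb, digit_zero_of_mem hc hx]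
  interval_cases c
  · simp
  · push_cast at hx ⊢
    rw [← walsh_add_one n (by linarith [hx.1] : (0 : ℝ) ≤ 2 * x - 1)]
    norm_num

lemma integral_Ico_walsh_two_mul_add {b c : ℕ} (hb : b < 2) (hc : c < 2) (n : ℕ) :
    ∫ x in Set.Ico ((c : ℝ) / 2) ((c + 1) / 2), walsh (2 * n + b) x
      = (-1) ^ (b * c) * 2⁻¹ * ∫ x in Set.Ico 0 1, walsh n x := by
  rw [setIntegral_congr_fun measurableSet_Ico fun x hx => walsh_two_mul_add_of_mem hb hc n hx,
    integral_const_mul, integral_Ico_comp_two_mul_sub, mul_assoc]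

lemma integral_walsh_two_mul_add {b : ℕ} (hb : b < 2) (n : ℕ) :
    ∫ x in Set.Ico 0 1, walsh (2 * n + b) x = 2⁻¹ * (1 + (-1) ^ b) * ∫ x in Set.Ico 0 1, walsh n x := by
  have hpiece := integral_Ico_walsh_two_mul_add hb (c := 0) two_pos n
  have hpiece' := integral_Ico_walsh_two_mul_add hb (c := 1) one_lt_two n
  norm_num at hpiece hpiece'
  conv_lhs => rw [← Ico_union_Ico_eq_Ico (by norm_num : (0 : ℝ) ≤ 1 / 2) (by norm_num),
    setIntegral_union Ico_disjoint_Ico_same measurableSet_Ico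
      (integrableOn_walsh _ (by simp)) (integrableOn_walsh _ (by simp)), hpiece, hpiece']
  ring

lemma integral_walsh (n : ℕ) : ∫ x in Set.Ico 0 1, walsh n x = if n = 0 then 1 else 0 := by
  induction n using Nat.strong_induction_on with
  | _ n ih =>
    rcases Nat.even_or_odd' n with ⟨m, rfl | rfl⟩
    · rcases eq_or_ne m 0 with rfl | hm
      · simp [walsh_zero]
      · rw [← add_zero (2 * m), integral_walsh_two_mul_add two_pos, ih m (by omega)]
        simp [hm]
    · rw [integral_walsh_two_mul_add one_lt_two]
      simp

end Orthogonality

section DirichletKernel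

lemma D_succ (M : ℕ) (x : ℝ) : D (M + 1) x = D M x + walsh M x := sum_range_succ _ _

lemma D_two_mul (M : ℕ) (x : ℝ) : D (2 * M) x = (1 + (-1) ^ digit 0 x) * D M (2 * x) := by
  induction M with
  | zero => simp [D]
  | succ M ih =>
    have heven := walsh_two_mul_add two_pos M x
    rw [add_zero, zero_mul, pow_zero, one_mul] at heven
    rw [show 2 * (M + 1) = 2 * M + 1 + 1 by ring, D_succ, D_succ, ih, heven,
      walsh_two_mul_add one_lt_two, one_mul, D_succ]
    ring

lemma mem_IN_succ_iff {N : ℕ} {x : ℝ} : x ∈ IN (N + 1) ↔ 2 * x ∈ IN N := by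
  simp only [IN, Set.mem_Ico, pow_succ]
  constructor <;> rintro ⟨h0, h1⟩ <;> refine ⟨by linarith, ?_⟩
  · rw [lt_div_iff₀ (by positivity)] at h1 ⊢; linarith
  · rw [lt_div_iff₀ (by positivity)] at h1 ⊢; linarith

lemma D_two_pow {x : ℝ} (hx : x ∈ Set.Ico 0 1) (N : ℕ) :
    D (2 ^ N) x = (IN N).indicator (fun _ => (2 : ℝ) ^ N) x := by
  induction N generalizing x with
  | zero => simp [D, walsh_zero, IN, hx]
  | succ N ih =>
    rw [pow_succ', D_two_mul]
    rcases lt_or_ge x (1 / 2) with hx2 | hx2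
    · have h2x : 2 * x ∈ Set.Ico 0 1 := ⟨by linarith [hx.1], by linarith⟩
      rw [digit_zero_of_mem (b := 0) two_pos ⟨by simpa using hx.1, by simpa using hx2⟩, ih h2x]
      by_cases hxN : x ∈ IN (N + 1)
      · rw [indicator_of_mem hxN, indicator_of_mem (mem_IN_succ_iff.1 hxN)]; ring
      · rw [indicator_of_notMem hxN, indicator_of_notMem (mt mem_IN_succ_iff.2 hxN)]; ring
    · have hxN : x ∉ IN (N + 1) := fun h => by
        have : (1 : ℝ) / 2 ^ (N + 1) ≤ 1 / 2 :=
          one_div_le_one_div_of_le two_pos (by simpa using pow_le_pow_right₀ one_le_two N.succ_pos)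
        linarith [h.2]
      rw [digit_zero_of_mem (b := 1) one_lt_two ⟨by simpa using hx2, by simpa using hx.2⟩,
        indicator_of_notMem hxN]
      ring

lemma D_eq_of_mem_IN {j s : ℕ} (hj : j ≤ 2 ^ s) {x : ℝ} (hx : x ∈ IN s) : D j x = j := by
  rw [D, sum_congr rfl fun k hk => walsh_eq_one_of_mem_IN ((mem_range.1 hk).trans_le hj) hx]
  simp

end DirichletKernel

section PartialSums

lemma integral_sum_walsh_mul_walsh (A : Finset ℕ) (k : ℕ) :
    ∫ x in Set.Ico 0 1, (∑ i ∈ A, walsh i x) * walsh k x = if k ∈ A then 1 else 0 := by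
  simp_rw [sum_mul, walsh_mul]
  rw [integral_finsetSum _ fun i _ => integrableOn_walsh _ (by simp)]
  simp_rw [integral_walsh, Nat.xor_eq_zero_iff]
  exact sum_ite_eq' A k fun _ => 1

lemma S_sum_walsh (A : Finset ℕ) (M : ℕ) (x : ℝ) :
    S (fun y => ∑ i ∈ A, walsh i y) M x = ∑ i ∈ A with i < M, walsh i x := by
  simp_rw [S, integral_sum_walsh_mul_walsh, ite_mul, one_mul, zero_mul]
  rw [← sum_filter]
  congr 1
  ext i
  simp [and_comm]

end PartialSums

def walshBlock (N : ℕ) (x : ℝ) : ℝ := ∑ i ∈ Finset.Ico (2 ^ N) (2 ^ (N + 1)), walsh i x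

section WalshBlock

lemma integrable_walshBlock (N : ℕ) : Integrable (walshBlock N) μI :=
  integrable_finsetSum _ fun i _ => integrableOn_walsh i (by simp)

lemma walshBlock_eq_mul (N : ℕ) (x : ℝ) : walshBlock N x = walsh (2 ^ N) x * D (2 ^ N) x := by
  rw [walshBlock, sum_Ico_eq_sum_range, show 2 ^ (N + 1) - 2 ^ N = 2 ^ N by rw [pow_succ]; omega,
    D, mul_sum]
  exact sum_congr rfl fun k hk => walsh_two_pow_add (mem_range.1 hk) x

lemma abs_walshBlock {x : ℝ} (hx : x ∈ Set.Ico 0 1) (N : ℕ) :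
    |walshBlock N x| = (IN N).indicator (fun _ => (2 : ℝ) ^ N) x := by
  rw [walshBlock_eq_mul, abs_mul, abs_walsh, one_mul, D_two_pow hx,
    abs_of_nonneg (indicator_nonneg (fun _ _ => by positivity) x)]

lemma S_walshBlock (N M : ℕ) (x : ℝ) :
    S (walshBlock N) M x = ∑ i ∈ Finset.Ico (2 ^ N) (2 ^ (N + 1)) with i < M, walsh i x :=
  S_sum_walsh _ M x

lemma S_walshBlock_of_le {N M : ℕ} (hM : M ≤ 2 ^ N) (x : ℝ) : S (walshBlock N) M x = 0 := by
  rw [S_walshBlock, filter_false_of_mem fun i hi => by simp at hi; omega, sum_empty]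

lemma S_walshBlock_of_ge {N M : ℕ} (hM : 2 ^ (N + 1) ≤ M) (x : ℝ) :
    S (walshBlock N) M x = walshBlock N x := by
  rw [S_walshBlock, filter_true_of_mem fun i hi => by simp at hi; omega, walshBlock]

lemma S_walshBlock_two_pow_add {N s j : ℕ} (hs : s ≤ N) (hj : j ≤ 2 ^ s) {x : ℝ}
    (hx : x ∈ IN s) : S (walshBlock N) (2 ^ N + j) x = j * walsh (2 ^ N) x := by
  have hsN : 2 ^ s ≤ 2 ^ N := Nat.pow_le_pow_right two_pos hs
  have hfilter : (Finset.Ico (2 ^ N) (2 ^ (N + 1))).filter (· < 2 ^ N + j)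
      = Finset.Ico (2 ^ N) (2 ^ N + j) := by
    ext i; simp only [mem_filter, Finset.mem_Ico, pow_succ]; omega
  rw [S_walshBlock, hfilter, sum_Ico_eq_sum_range, Nat.add_sub_cancel_left,
    sum_congr rfl fun k hk => walsh_two_pow_add (by simp at hk; omega) x, ← mul_sum, ← D,
    D_eq_of_mem_IN hj hx, mul_comm]

lemma maxS_walshBlock_le (N : ℕ) (x : ℝ) :
    maxS (walshBlock N) x ≤ ENNReal.ofReal |walshBlock N x| := by
  refine iSup_le fun m => ?_
  rcases le_or_gt m N with hm | hm
  · rw [S_walshBlock_of_le (Nat.pow_le_pow_right two_pos hm), abs_zero, ENNReal.ofReal_zero]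
    positivity
  · rw [S_walshBlock_of_ge (Nat.pow_le_pow_right two_pos hm)]

end WalshBlock

section Quasinorms

lemma measurableSet_IN (N : ℕ) : MeasurableSet (IN N) := measurableSet_Ico

lemma LpNormE_half (g : ℝ → ℝ≥0∞) :
    LpNormE (1 / 2) g = (∫⁻ x in Set.Ico 0 1, g x ^ (1 / 2 : ℝ)) ^ 2 := by
  rw [LpNormE, show (1 : ℝ) / (1 / 2) = (2 : ℕ) by norm_num, ENNReal.rpow_natCast]

lemma ofReal_rpow_half {a : ℝ} (ha : 0 ≤ a) :
    ENNReal.ofReal a ^ (1 / 2 : ℝ) = ENNReal.ofReal √a := by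
  rw [ENNReal.ofReal_rpow_of_nonneg ha (by norm_num), Real.sqrt_eq_rpow, one_div]

lemma HpNorm_walshBlock_le (N : ℕ) :
    HpNorm (1 / 2) (walshBlock N) ≤ ENNReal.ofReal (1 / 2 ^ N) := by
  have hpow : ∀ x ∈ Set.Ico (0 : ℝ) 1, ENNReal.ofReal |walshBlock N x| ^ (1 / 2 : ℝ)
      = (IN N).indicator (fun _ => ENNReal.ofReal √(2 ^ N)) x := fun x hx => by
    rw [abs_walshBlock hx]
    by_cases h : x ∈ IN N
    · rw [indicator_of_mem h, indicator_of_mem h, ofReal_rpow_half (by positivity)]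
    · rw [indicator_of_notMem h, indicator_of_notMem h, ENNReal.ofReal_zero,
        ENNReal.zero_rpow_of_pos (by norm_num)]
  have hIN : IN N ∩ Set.Ico 0 1 = IN N := inter_eq_left.2 <|
    Ico_subset_Ico_right (div_le_one_of_le₀ (one_le_pow₀ one_le_two) (by positivity))
  calc HpNorm (1 / 2) (walshBlock N)
      = (∫⁻ x in Set.Ico 0 1, maxS (walshBlock N) x ^ (1 / 2 : ℝ)) ^ 2 := LpNormE_half _
    _ ≤ (∫⁻ x in Set.Ico 0 1, ENNReal.ofReal |walshBlock N x| ^ (1 / 2 : ℝ)) ^ 2 := by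
      gcongr with x
      exact maxS_walshBlock_le N x
    _ = ENNReal.ofReal ((√(2 ^ N) * (1 / 2 ^ N)) ^ 2) := by
      rw [setLIntegral_congr_fun measurableSet_Ico hpow, lintegral_indicator (measurableSet_IN N),
        setLIntegral_const, Measure.restrict_apply (measurableSet_IN N), hIN, IN, Real.volume_Ico,
        sub_zero, ← ENNReal.ofReal_mul (by positivity), ENNReal.ofReal_pow (by positivity)]
    _ = ENNReal.ofReal (1 / 2 ^ N) := by
      rw [mul_pow, Real.sq_sqrt (by positivity)]
      field_simp

end Quasinorms

section NorlundWeights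

variable {q : ℕ → ℝ}

lemma Q_pos (hq : ∀ k, 0 < q k) {n : ℕ} (hn : 0 < n) : 0 < Q q n :=
  sum_pos (fun k _ => hq k) (nonempty_range_iff.2 hn.ne')

lemma monotone_Q (hq : ∀ k, 0 ≤ q k) : Monotone (Q q) := fun _ _ hnm =>
  sum_le_sum_of_subset_of_nonneg (range_subset_range.2 hnm) fun k _ _ => hq k

lemma Q_two_mul_le (hq : Antitone q) (m : ℕ) : Q q (2 * m) ≤ 2 * Q q m := by
  have htail : ∑ l ∈ range m, q (m + l) ≤ Q q m := sum_le_sum fun l _ => hq (by omega)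
  rw [Q, two_mul, sum_range_add, ← Q]
  linarith

lemma Q_two_pow_mul_le (hq : Antitone q) (m k : ℕ) : Q q (2 ^ k * m) ≤ 2 ^ k * Q q m := by
  induction k with
  | zero => simp
  | succ k ih =>
    calc Q q (2 ^ (k + 1) * m) = Q q (2 * (2 ^ k * m)) := by ring_nf
      _ ≤ 2 * Q q (2 ^ k * m) := Q_two_mul_le hq _
      _ ≤ 2 ^ (k + 1) * Q q m := by rw [pow_succ']; linarith

lemma mul_Q_le_sum_Icc (hq : ∀ k, 0 ≤ q k) (h : ℕ) :
    h * Q q h ≤ ∑ i ∈ Icc 1 (2 * h), q (2 * h - i) * i := by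
  have hreindex : ∑ i ∈ Icc (h + 1) (2 * h), q (2 * h - i) = Q q h := by
    refine sum_nbij' (fun i => 2 * h - i) (fun l => 2 * h - l) ?_ ?_ ?_ ?_ fun _ _ => rfl <;>
      intro a ha <;> simp only [Finset.mem_Icc, Finset.mem_range] at ha ⊢ <;> omega
  calc (h : ℝ) * Q q h = ∑ i ∈ Icc (h + 1) (2 * h), q (2 * h - i) * h := by
        rw [← sum_mul, hreindex, mul_comm]
    _ ≤ ∑ i ∈ Icc (h + 1) (2 * h), q (2 * h - i) * i :=
        sum_le_sum fun i hi => mul_le_mul_of_nonneg_left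
          (by exact_mod_cast (mem_Icc.1 hi).1.trans' h.le_succ) (hq _)
    _ ≤ ∑ i ∈ Icc 1 (2 * h), q (2 * h - i) * i :=
        sum_le_sum_of_subset_of_nonneg (Icc_subset_Icc (by omega) le_rfl)
          fun i _ _ => mul_nonneg (hq _) (Nat.cast_nonneg i)

lemma sum_Icc_add_of_eq_zero (g c : ℕ → ℝ) {a : ℕ} (hc : ∀ k ≤ a, c k = 0) (m : ℕ) :
    ∑ k ∈ Icc 1 (a + m), g (a + m - k) * c k = ∑ i ∈ Icc 1 m, g (m - i) * c (a + i) := by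
  have hsplit : ∑ k ∈ Icc 1 (a + m), g (a + m - k) * c k
      = ∑ k ∈ Icc (a + 1) (a + m), g (a + m - k) * c k :=
    (sum_subset (Icc_subset_Icc (by omega) le_rfl) fun k hk hk' => by
      rw [hc k (by simp at hk hk'; omega), mul_zero]).symm
  rw [hsplit, ← map_add_left_Icc, sum_map]
  exact sum_congr rfl fun i _ => by simp [Nat.add_sub_add_left]

end NorlundWeights

section NorlundMeans

variable {q : ℕ → ℝ}

lemma t_walshBlock_two_pow_add {N r j : ℕ} (hr : r ≤ N) (hj : j ≤ 2 ^ r) {x : ℝ} (hx : x ∈ IN r) :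
    t q (2 ^ N + j) (walshBlock N) x
      = (∑ i ∈ Icc 1 j, q (j - i) * i) / Q q (2 ^ N + j) * walsh (2 ^ N) x := by
  rw [t, sum_Icc_add_of_eq_zero q (fun k => S (walshBlock N) k x)
      (fun k hk => S_walshBlock_of_le hk x),
    sum_congr rfl fun i hi => by
      rw [S_walshBlock_two_pow_add hr ((mem_Icc.1 hi).2.trans hj) hx, ← mul_assoc],
    ← sum_mul]
  ring

lemma abs_t_walshBlock_ge (hq_anti : Antitone q) (hq_pos : ∀ k, 0 < q k) {N s : ℕ} (hs : s < N)
    {x : ℝ} (hx : x ∈ IN (s + 1)) :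
    (2 : ℝ) ^ (2 * s) / 2 ^ (N + 1) ≤ |t q (2 ^ N + 2 ^ (s + 1)) (walshBlock N) x| := by
  have hq : ∀ k, 0 ≤ q k := fun k => (hq_pos k).le
  have hQs : 0 < Q q (2 ^ s) := Q_pos hq_pos (by positivity)
  have hQn : 0 < Q q (2 ^ N + 2 ^ (s + 1)) := Q_pos hq_pos (by positivity)
  have hnum : (2 : ℝ) ^ s * Q q (2 ^ s) ≤ ∑ i ∈ Icc 1 (2 ^ (s + 1)), q (2 ^ (s + 1) - i) * i := by
    simpa [pow_succ'] using mul_Q_le_sum_Icc hq (2 ^ s)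
  have hden : Q q (2 ^ N + 2 ^ (s + 1)) ≤ 2 ^ (N + 1 - s) * Q q (2 ^ s) := by
    have hle : 2 ^ N + 2 ^ (s + 1) ≤ 2 ^ (N + 1 - s) * 2 ^ s := by
      rw [← pow_add, show N + 1 - s + s = N + 1 by omega, pow_succ]
      have := Nat.pow_le_pow_right two_pos (show s + 1 ≤ N by omega)
      omega
    exact (monotone_Q hq hle).trans (by exact_mod_cast Q_two_pow_mul_le hq_anti (2 ^ s) (N + 1 - s))
  rw [t_walshBlock_two_pow_add (by omega) le_rfl hx, abs_mul, abs_walsh, mul_one,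
    abs_of_nonneg (div_nonneg (hnum.trans' (by positivity)) hQn.le)]
  calc (2 : ℝ) ^ (2 * s) / 2 ^ (N + 1) = 2 ^ s * Q q (2 ^ s) / (2 ^ (N + 1 - s) * Q q (2 ^ s)) := by
        rw [mul_div_mul_right _ _ hQs.ne', div_eq_div_iff (by positivity) (by positivity),
          ← pow_add, ← pow_add]
        congr 1; omega
    _ ≤ _ := div_le_div₀ (hnum.trans' (by positivity)) hnum hQn hden

lemma ofReal_abs_t_le_tstar (f : ℝ → ℝ) {n : ℕ} (hn : 1 ≤ n) (x : ℝ) :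
    ENNReal.ofReal |t q n f x| ≤ tstar q f x :=
  le_biSup (fun n => ENNReal.ofReal |t q n f x|) (Set.mem_Ici.2 hn)

end NorlundMeans

section LowerBound

def dyadicShell (s : ℕ) : Set ℝ := Set.Ico (1 / 2 ^ (s + 2)) (1 / 2 ^ (s + 1))

lemma pairwiseDisjoint_dyadicShell (N : ℕ) :
    Set.PairwiseDisjoint ↑(Finset.range N) dyadicShell := by
  have hanti : Antitone fun n : ℕ => (1 : ℝ) / 2 ^ (n + 1) := fun a b hab =>
    one_div_le_one_div_of_le (by positivity) (pow_le_pow_right₀ one_le_two (by omega))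
  exact (hanti.pairwise_disjoint_on_Ico_succ).set_pairwise _

lemma dyadicShell_subset_Ico (s : ℕ) : dyadicShell s ⊆ Set.Ico 0 1 :=
  Ico_subset_Ico (by positivity) (div_le_one_of_le₀ (one_le_pow₀ one_le_two) (by positivity))

lemma volume_dyadicShell (s : ℕ) : volume (dyadicShell s) = ENNReal.ofReal (1 / 2 ^ (s + 2)) := by
  rw [dyadicShell, Real.volume_Ico]
  congr 1
  rw [pow_succ _ (s + 1)]
  ring

lemma ofReal_le_lintegral_rpow_half {g : ℝ → ℝ≥0∞} {c : ℝ} (hc : 0 ≤ c) {N : ℕ}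
    (hg : ∀ s < N, ∀ x ∈ dyadicShell s, ENNReal.ofReal ((2 ^ s * c) ^ 2) ≤ g x) :
    ENNReal.ofReal (N * c / 4) ≤ ∫⁻ x in Set.Ico 0 1, g x ^ (1 / 2 : ℝ) := by
  have hshell : ∀ s < N, ENNReal.ofReal (c / 4) ≤ ∫⁻ x in dyadicShell s, g x ^ (1 / 2 : ℝ) := by
    intro s hs
    calc ENNReal.ofReal (c / 4) = ∫⁻ _ in dyadicShell s, ENNReal.ofReal (2 ^ s * c) := by
          rw [setLIntegral_const, volume_dyadicShell, ← ENNReal.ofReal_mul (by positivity)]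
          congr 1
          field_simp
          ring
      _ ≤ ∫⁻ x in dyadicShell s, g x ^ (1 / 2 : ℝ) := setLIntegral_mono' measurableSet_Ico
          fun x hx => by
            rw [← Real.sqrt_sq (by positivity : 0 ≤ 2 ^ s * c), ← ofReal_rpow_half (sq_nonneg _)]
            exact ENNReal.rpow_le_rpow (hg s hs x hx) (by norm_num)
  calc ENNReal.ofReal (N * c / 4) = ∑ _s ∈ range N, ENNReal.ofReal (c / 4) := by
        rw [sum_const, card_range, nsmul_eq_mul, ← ENNReal.ofReal_natCast,
          ← ENNReal.ofReal_mul (Nat.cast_nonneg N), mul_div_assoc]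
    _ ≤ ∑ s ∈ range N, ∫⁻ x in dyadicShell s, g x ^ (1 / 2 : ℝ) :=
        sum_le_sum fun s hs => hshell s (mem_range.1 hs)
    _ = ∫⁻ x in ⋃ s ∈ Finset.range N, dyadicShell s, g x ^ (1 / 2 : ℝ) :=
        (lintegral_biUnion_finset (pairwiseDisjoint_dyadicShell N)
          (fun _ _ => measurableSet_Ico) _).symm
    _ ≤ ∫⁻ x in Set.Ico 0 1, g x ^ (1 / 2 : ℝ) :=
        lintegral_mono_set (iUnion₂_subset fun s _ => dyadicShell_subset_Ico s)

lemma LpNormE_tstar_walshBlock_ge {q : ℕ → ℝ} (hq_anti : Antitone q) (hq_pos : ∀ k, 0 < q k)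
    (N : ℕ) : ENNReal.ofReal (N ^ 2 / (32 * 2 ^ N)) ≤ LpNormE (1 / 2) (tstar q (walshBlock N)) := by
  set c : ℝ := √(1 / 2 ^ (N + 1))
  have hc2 : c ^ 2 = 1 / 2 ^ (N + 1) := Real.sq_sqrt (by positivity)
  have hg : ∀ s < N, ∀ x ∈ dyadicShell s,
      ENNReal.ofReal ((2 ^ s * c) ^ 2) ≤ tstar q (walshBlock N) x := fun s hs x hx => by
    have hxIN : x ∈ IN (s + 1) := ⟨(by positivity : (0 : ℝ) ≤ 1 / 2 ^ (s + 2)).trans hx.1, hx.2⟩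
    have hpow : ((2 : ℝ) ^ s * c) ^ 2 = 2 ^ (2 * s) / 2 ^ (N + 1) := by
      rw [mul_pow, hc2, ← pow_mul, mul_comm s]; ring
    rw [hpow]
    exact (ENNReal.ofReal_le_ofReal (abs_t_walshBlock_ge hq_anti hq_pos hs hxIN)).trans
      (ofReal_abs_t_le_tstar _ (le_add_right Nat.one_le_two_pow) x)
  calc ENNReal.ofReal (N ^ 2 / (32 * 2 ^ N)) = ENNReal.ofReal (N * c / 4) ^ 2 := by
        rw [← ENNReal.ofReal_pow (by positivity), div_pow, mul_pow, hc2, pow_succ]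
        congr 1
        ring
    _ ≤ LpNormE (1 / 2) (tstar q (walshBlock N)) := by
        rw [LpNormE_half]
        gcongr
        exact ofReal_le_lintegral_rpow_half (Real.sqrt_nonneg _) hg

end LowerBound

end Walsh

/-- for non-increasing positive weights the maximal Nörlund operator
is never bounded from `H_{1/2}[0,1)` to `L^{1/2}[0,1)`. -/
theorem norlund_maximal_not_bounded_H_half
    (q : ℕ → ℝ) (hq_anti : Antitone q) (hq_pos : ∀ k, 0 < q k) :
    ¬ ∃ C : ℝ≥0, ∀ f : ℝ → ℝ, MeasureTheory.Integrable f Walsh.μI →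
        Walsh.HpNorm (1/2) f < ⊤ →
        Walsh.LpNormE (1/2) (Walsh.tstar q f) ≤ (C : ℝ≥0∞) * Walsh.HpNorm (1/2) f := by
  open Walsh in
  rintro ⟨C, hC⟩
  obtain ⟨N, hN⟩ := exists_nat_gt (32 * C : ℝ)
  have hH := HpNorm_walshBlock_le N
  have hbound : ENNReal.ofReal (N ^ 2 / (32 * 2 ^ N)) ≤ ENNReal.ofReal (C * (1 / 2 ^ N)) :=
    calc ENNReal.ofReal (N ^ 2 / (32 * 2 ^ N))
        ≤ LpNormE (1 / 2) (tstar q (walshBlock N)) := LpNormE_tstar_walshBlock_ge hq_anti hq_pos N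
      _ ≤ C * HpNorm (1 / 2) (walshBlock N) :=
          hC _ (integrable_walshBlock N) (hH.trans_lt ENNReal.ofReal_lt_top)
      _ ≤ C * ENNReal.ofReal (1 / 2 ^ N) := by gcongr
      _ = ENNReal.ofReal (C * (1 / 2 ^ N)) := by
          rw [ENNReal.ofReal_mul C.coe_nonneg, ENNReal.ofReal_coe_nnreal]
  rw [ENNReal.ofReal_le_ofReal_iff (by positivity), div_le_iff₀ (by positivity),
    show (C : ℝ) * (1 / 2 ^ N) * (32 * 2 ^ N) = 32 * C by field_simp] at hbound
  have hNsq : (N : ℝ) ≤ N ^ 2 := by exact_mod_cast Nat.le_self_pow two_ne_zero N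
  linarith
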